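/- The ℂ-linear span of {p(χ) : χ∈F(𝔹)} in U(sl₂⊗A) equals the unital subalgebra of U(sl₂⊗A) generated by {h⊗a : a∈A} (the image of U(ℂh⊗A) in U(sl₂⊗A)). -/

import Mathlib

open scoped TensorProduct
open Finsupp
open scoped Classical

noncomputable section

namespace MapAlgebra

/-- the divided power `u^{(r)} = u^r / r!` in a `ℂ`-algebra. -/
def dp {S : Type*} [Ring S] [Algebra ℂ S] (u : S) (r : ℕ) : S :=
  (r.factorial : ℂ)⁻¹ • u ^ r

variable {A : Type*} [CommRing A] [Algebra ℂ A]

/-- `|ψ| = Σ_a ψ(a)` for a multiset `ψ` of elements of `A`. -/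
def wt (ψ : A →₀ ℕ) : ℕ := ψ.sum fun _ n => n

/-- `π(ψ) = ∏_a a^{ψ(a)}`. -/
def piF (ψ : A →₀ ℕ) : A := ψ.prod fun a n => a ^ n

/-- `m(ψ) = |ψ|! / ∏_a ψ(a)!`. -/
def mF (ψ : A →₀ ℕ) : ℕ := Finsupp.multinomial ψ

variable {L : Type*} [LieRing L] [LieAlgebra ℂ L]

instance : LieAlgebra ℂ (A ⊗[ℂ] L) where
  lie_smul c x y := by
    rw [← algebraMap_smul A c y, lie_smul, algebraMap_smul]

/-- The universal enveloping algebra `U(L ⊗ A)` of the map algebra `L ⊗ A`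
(realized as `A ⊗[ℂ] L` with bracket `[a ⊗ z, b ⊗ z'] = ab ⊗ [z,z']`). -/
abbrev UEA (A : Type*) [CommRing A] [Algebra ℂ A]
    (L : Type*) [LieRing L] [LieAlgebra ℂ L] : Type _ :=
  UniversalEnvelopingAlgebra ℂ (A ⊗[ℂ] L)

/-- The element `v ⊗ a` of the map algebra, viewed inside `U(L ⊗ A)`. -/
def el (a : A) (v : L) : UEA A L :=
  UniversalEnvelopingAlgebra.ι ℂ (a ⊗ₜ[ℂ] v)

lemma commute_el (a b : A) (v : L) : Commute (el a v : UEA A L) (el b v) := by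
  letI := LieRing.ofAssociativeRing (A := UEA A L)
  have h := (UniversalEnvelopingAlgebra.ι ℂ).map_lie (a ⊗ₜ[ℂ] v) (b ⊗ₜ[ℂ] v)
  rw [LieAlgebra.ExtendScalars.bracket_tmul, lie_self, TensorProduct.tmul_zero, map_zero,
    Ring.lie_def] at h
  exact (sub_eq_zero.mp h.symm)

lemma commute_dp {S : Type*} [Ring S] [Algebra ℂ S] {u w : S} (h : Commute u w)
    (r s : ℕ) : Commute (dp u r) (dp w s) :=
  ((h.pow_pow r s).smul_left _).smul_right _

/-- `x^±(ψ) = ∏_a (x^± ⊗ a)^{(ψ(a))}` (generic in the element `v` of `L`);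
the factors pairwise commute, so the product is unambiguous. -/
def xProd (v : L) (ψ : A →₀ ℕ) : UEA A L :=
  ψ.support.noncommProd (fun a => dp (el a v) (ψ a))
    (fun a _ b _ _ => commute_dp (commute_el a b v) _ _)

/-- the predicate characterizing the recursively defined family
`p : F × F → U(L ⊗ A)` (relative to a choice `v` playing the role of `h`). -/
def IsP (v : L) (p : (A →₀ ℕ) → (A →₀ ℕ) → UEA A L) : Prop :=
  p 0 0 = 1 ∧
  (∀ φ χ, wt φ ≠ wt χ → p φ χ = 0) ∧
  (∀ φ χ, φ ≠ 0 → χ ≠ 0 → wt φ = wt χ →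
    p φ χ = -((wt φ : ℂ)⁻¹) •
      ∑ ψ₁ ∈ (Finset.Iic φ).erase 0, ∑ ψ₂ ∈ (Finset.Iic χ).erase 0,
        ((mF ψ₁ * mF ψ₂ : ℕ) : ℂ) • (el (piF ψ₁ * piF ψ₂) v * p (φ - ψ₁) (χ - ψ₂)))

/-- `p(χ) = p(χ, |χ|·χ₁)`. -/
def pOne (p : (A →₀ ℕ) → (A →₀ ℕ) → UEA A L) (χ : A →₀ ℕ) : UEA A L :=
  p χ (Finsupp.single (1 : A) (wt χ))

/-- the predicate characterizing the recursively defined family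
`D^± : F³ → U(L ⊗ A)` (relative to a choice `v` playing the role of `x^±`). -/
def IsD (v : L) (D : (A →₀ ℕ) → (A →₀ ℕ) → (A →₀ ℕ) → UEA A L) : Prop :=
  (D 0 0 0 = 1) ∧
  (∀ ψ₁ ψ₂ : A →₀ ℕ, ¬(ψ₁ = 0 ∧ ψ₂ = 0) → D ψ₁ ψ₂ 0 = 0) ∧
  (∀ (ψ₁ ψ₂ : A →₀ ℕ) (b : A), D ψ₁ ψ₂ (Finsupp.single b 1) =
      if wt ψ₁ = wt ψ₂ then ((mF ψ₁ * mF ψ₂ : ℕ) : ℂ) • el (b * (piF ψ₁ * piF ψ₂)) v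
      else 0) ∧
  (∀ ψ₁ ψ₂ ψ₃ : A →₀ ℕ, 2 ≤ wt ψ₃ →
    D ψ₁ ψ₂ ψ₃ = (wt ψ₃ : ℂ)⁻¹ •
      ∑ φ₁ ∈ Finset.Iic ψ₁, ∑ φ₂ ∈ Finset.Iic ψ₂, ∑ b ∈ ψ₃.support,
        D φ₁ φ₂ (Finsupp.single b 1) *
          D (ψ₁ - φ₁) (ψ₂ - φ₂) (ψ₃ - Finsupp.single b 1))

/-- `𝔻(ψ₁,ψ₂,ψ₃) = Σ_{φ₁≤ψ₁} Σ_{φ₂≤ψ₂} p(φ₁,φ₂) D⁺(ψ₁−φ₁,ψ₂−φ₂,ψ₃)`. -/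
def DD (p : (A →₀ ℕ) → (A →₀ ℕ) → UEA A L)
    (Dp : (A →₀ ℕ) → (A →₀ ℕ) → (A →₀ ℕ) → UEA A L)
    (ψ₁ ψ₂ ψ₃ : A →₀ ℕ) : UEA A L :=
  ∑ φ₁ ∈ Finset.Iic ψ₁, ∑ φ₂ ∈ Finset.Iic ψ₂,
    p φ₁ φ₂ * Dp (ψ₁ - φ₁) (ψ₂ - φ₂) ψ₃

/-- the Lie algebra `sl₂` presented by a basis `x⁻ = b 0`, `h = b 1`, `x⁺ = b 2`
with `[h,x^±] = ±2x^±`, `[x⁺,x⁻] = h`. -/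
structure Sl2Data (L : Type*) [LieRing L] [LieAlgebra ℂ L] where
  b : Module.Basis (Fin 3) ℂ L
  lie_h_xp : ⁅b 1, b 2⁆ = (2 : ℂ) • b 2
  lie_h_xm : ⁅b 1, b 0⁆ = (-2 : ℂ) • b 0
  lie_xp_xm : ⁅b 2, b 0⁆ = b 1

/-- `x⁻`. -/
def Sl2Data.xm (S : Sl2Data L) : L := S.b 0
/-- `h`. -/
def Sl2Data.h (S : Sl2Data L) : L := S.b 1
/-- `x⁺`. -/
def Sl2Data.xp (S : Sl2Data L) : L := S.b 2

/-- The data of a root system and Chevalley basis for a (finite-dimensional simple)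
complex Lie algebra `g`: a Cartan subalgebra `H`, the roots `R`, the positive roots
`Rpos` enumerated as `β 0, …, β (m-1)`, simple roots `α 0, …, α (n-1)`, root vectors
`x s γ` (`s = true` for `x_γ⁺`, `s = false` for `x_γ⁻`), coroots, integral Cartan
pairing, and structure constants `±(p+1)`. -/
structure ChevalleyData (g : Type*) [LieRing g] [LieAlgebra ℂ g] where
  n : ℕ
  m : ℕ
  H : LieSubalgebra ℂ g
  cartan : H.IsCartanSubalgebra
  R : Set (Module.Dual ℂ H)
  Rpos : Set (Module.Dual ℂ H)
  β : Fin m → Module.Dual ℂ H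
  β_inj : Function.Injective β
  Rpos_eq : Rpos = Set.range β
  α : Fin n → Module.Dual ℂ H
  α_mem : ∀ i, α i ∈ Rpos
  R_eq : R = Rpos ∪ (fun γ => -γ) '' Rpos
  x : Bool → Module.Dual ℂ H → g
  coroot : Module.Dual ℂ H → H
  chevBasis : Module.Basis ((Fin m × Bool) ⊕ Fin n) ℂ g
  chevBasis_x : ∀ (k : Fin m) (s : Bool), chevBasis (Sum.inl (k, s)) = x s (β k)
  chevBasis_h : ∀ i : Fin n, chevBasis (Sum.inr i) = (coroot (α i) : g)
  rootvec_pos : ∀ γ ∈ Rpos, ∀ t : H, ⁅(t : g), x true γ⁆ = γ t • x true γ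
  rootvec_neg : ∀ γ ∈ Rpos, ∀ t : H, ⁅(t : g), x false γ⁆ = -(γ t) • x false γ
  coroot_def : ∀ γ ∈ Rpos, ⁅x true γ, x false γ⁆ = (coroot γ : g)
  pairing : Module.Dual ℂ H → Module.Dual ℂ H → ℤ
  pairing_eq : ∀ γ ∈ Rpos, ∀ δ ∈ R, δ (coroot γ) = (pairing γ δ : ℂ)
  pairing_self : ∀ γ ∈ Rpos, pairing γ γ = 2
  struct : ∀ γ δ, γ ∈ Rpos → δ ∈ Rpos → γ + δ ∈ R → ∃ (c : ℤ) (pm : ℕ),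
    (δ - (pm : ℤ) • γ ∈ R) ∧ (∀ q : ℕ, δ - (q : ℤ) • γ ∈ R → q ≤ pm) ∧
    (c = pm + 1 ∨ c = -(pm + 1)) ∧
    ⁅x true γ, x true δ⁆ = (c : ℂ) • x true (γ + δ) ∧
    ⁅x false γ, x false δ⁆ = (-c : ℂ) • x false (γ + δ)

/-- `ψ ∈ F(𝔹)`: the multiset `ψ` is supported on the basis `𝔹 = range bA` of `A`. -/
def SuppB {ιA : Type*} (bA : Module.Basis ιA ℂ A) (ψ : A →₀ ℕ) : Prop :=
  ∀ a ∈ ψ.support, a ∈ Set.range bA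

variable {g : Type*} [LieRing g] [LieAlgebra ℂ g]

/-- The integral form `U_ℤ(g ⊗ A)`: the `ℤ`-subalgebra of `U(g ⊗ A)` generated by all
divided powers `(x_α^± ⊗ b)^{(r)}`, `α ∈ R⁺`, `b ∈ 𝔹`, `r ∈ ℕ`. -/
def UZ (C : ChevalleyData g) {ιA : Type*} (bA : Module.Basis ιA ℂ A) : Subalgebra ℤ (UEA A g) :=
  Algebra.adjoin ℤ {u : UEA A g | ∃ (k : Fin C.m) (s : Bool) (i : ιA) (r : ℕ),
    u = dp (el (bA i) (C.x s (C.β k))) r}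

/-- `U_ℤ^±(g ⊗ A)` (one sign `s` only). -/
def UZpm (C : ChevalleyData g) {ιA : Type*} (bA : Module.Basis ιA ℂ A) (s : Bool) :
    Subalgebra ℤ (UEA A g) :=
  Algebra.adjoin ℤ {u : UEA A g | ∃ (k : Fin C.m) (i : ιA) (r : ℕ),
    u = dp (el (bA i) (C.x s (C.β k))) r}


/-- generalized binomial coefficient `C(z,k) = z(z-1)⋯(z-k+1)/k!` (as a complex scalar). -/
def cchoose (z : ℂ) (k : ℕ) : ℂ :=
  (k.factorial : ℂ)⁻¹ * ∏ j ∈ Finset.range k, (z - (j : ℂ))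

/-- the (finite) set `P_k(ψ)` of partitions of `ψ` into `k` parts,
i.e. finitely supported `χ : F → ℕ` with `Σ_φ χ(φ)·φ = ψ` and `Σ_φ χ(φ) = k`. -/
def partitions (ψ : A →₀ ℕ) (k : ℕ) : Finset ((A →₀ ℕ) →₀ ℕ) :=
  (Finset.Iic ((Finset.Iic ψ).sum fun φ => Finsupp.single φ k)).filter
    (fun χ => (χ.sum fun φ c => c • φ) = ψ ∧ (χ.sum fun _ c => c) = k)

/-- the (finite) set `S_k(χ)` of finitely supported `ψ : F → ℕ` with
`Σ_φ ψ(φ)·φ ≤ χ` and `Σ_φ ψ(φ) = k`. -/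
def subPartitions (χ : A →₀ ℕ) (k : ℕ) : Finset ((A →₀ ℕ) →₀ ℕ) :=
  (Finset.Iic ((Finset.Iic χ).sum fun φ => Finsupp.single φ k)).filter
    (fun ψ => (ψ.sum fun φ c => c • φ) ≤ χ ∧ (ψ.sum fun _ c => c) = k)

/-- `U_ℤ^0(g ⊗ A)`: the `ℤ`-subalgebra generated by the `p_i(χ)`, `χ ∈ F(𝔹)`,
where `P i` is the family `p_i` (defined by recursion relative to `h_{α_i}`). -/
def UZ0 (C : ChevalleyData g) {ιA : Type*} (bA : Module.Basis ιA ℂ A)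
    (P : Fin C.n → (A →₀ ℕ) → (A →₀ ℕ) → UEA A g) : Subalgebra ℤ (UEA A g) :=
  Algebra.adjoin ℤ {u : UEA A g | ∃ (i : Fin C.n) (χ : A →₀ ℕ), SuppB bA χ ∧ u = pOne (P i) χ}

/-!
The inclusion `⊆` follows from the recursion by induction on `|φ|`. For `⊇`, let `V_{<n}` be the
span of the monomials `∏_a (h ⊗ a)^{χ(a)}` with `χ ∈ F(𝔹)` and `|χ| < n`; all these monomials
together span the algebra generated by the `h ⊗ a`. Expanding `h ⊗ a` in the basis `𝔹` gives
`(h ⊗ a) V_{<n} ⊆ V_{<n+1}`, so modulo `V_{<|χ|}` only the terms with `|ψ₁| = 1` survive in the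
recursion for `p(χ)`. By induction, `p(χ) ≡ (-1)^{|χ|} q_χ ∏_a (h ⊗ a)^{χ(a)}` with `q_χ > 0`:
the surviving terms all carry the same sign, so they cannot cancel. Hence each monomial lies in
the span of the `p(χ)`, again by induction on `|χ|`.
-/

lemma sum_sub_sum_smul_mem {ι R M : Type*} [Ring R] [AddCommGroup M] [Module R M]
    {V : Submodule R M} {s : Finset ι} {f : ι → M} {r : ι → R} {e : M}
    (h : ∀ i ∈ s, f i - r i • e ∈ V) : ∑ i ∈ s, f i - (∑ i ∈ s, r i) • e ∈ V := by
  rw [Finset.sum_smul, ← Finset.sum_sub_distrib]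
  exact V.sum_mem h

section Multisets

variable {α : Type*}

lemma wt_eq_degree (ψ : α →₀ ℕ) : wt ψ = ψ.degree := rfl

lemma wt_add (φ ψ : α →₀ ℕ) : wt (φ + ψ) = wt φ + wt ψ := map_add Finsupp.degree φ ψ

lemma wt_single (a : α) (n : ℕ) : wt (Finsupp.single a n) = n := Finsupp.degree_single a n

lemma wt_eq_zero_iff {ψ : α →₀ ℕ} : wt ψ = 0 ↔ ψ = 0 := Finsupp.degree_eq_zero_iff ψ

lemma wt_pos {ψ : α →₀ ℕ} (h : ψ ≠ 0) : 0 < wt ψ :=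
  Nat.pos_of_ne_zero (wt_eq_zero_iff.not.mpr h)

lemma wt_le_wt {φ ψ : α →₀ ℕ} (h : φ ≤ ψ) : wt φ ≤ wt ψ := Finsupp.degree_mono h

lemma wt_tsub {φ ψ : α →₀ ℕ} (h : φ ≤ ψ) : wt (ψ - φ) = wt ψ - wt φ := by
  have := wt_add (ψ - φ) φ
  rw [tsub_add_cancel_of_le h] at this
  omega

lemma eq_single_of_wt_eq_one {ψ : α →₀ ℕ} (h : wt ψ = 1) : ∃ a, ψ = Finsupp.single a 1 := by
  obtain ⟨a, ha⟩ : ψ ∈ Set.range fun a : α => Finsupp.single a 1 := by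
    rw [Finsupp.range_single_one]; exact h
  exact ⟨a, ha.symm⟩

lemma eq_single_wt_of_le_single {ψ : α →₀ ℕ} {a : α} {n : ℕ} (h : ψ ≤ Finsupp.single a n) :
    ψ = Finsupp.single a (wt ψ) := by
  have hsupp : ψ.support ⊆ {a} := (Finsupp.support_mono h).trans Finsupp.support_single_subset
  rw [Finsupp.eq_single_iff, wt_eq_degree, Finsupp.degree_apply,
    Finset.sum_subset hsupp (by simp_all), Finset.sum_singleton]
  exact ⟨hsupp, rfl⟩

lemma mF_single (a : α) (n : ℕ) : mF (Finsupp.single a n) = 1 := by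
  rw [mF, Finsupp.multinomial_eq_of_support_subset Finsupp.support_single_subset,
    Nat.multinomial_singleton]

lemma piF_single {R : Type*} [CommRing R] (a : R) (n : ℕ) : piF (Finsupp.single a n) = a ^ n :=
  Finsupp.prod_single_index (pow_zero a)

end Multisets

section SuppB

variable {ιA : Type*} {bA : Module.Basis ιA ℂ A}

lemma suppB_zero : SuppB bA 0 := by simp [SuppB]

lemma SuppB.mono {φ ψ : A →₀ ℕ} (hψ : SuppB bA ψ) (h : φ ≤ ψ) : SuppB bA φ :=
  fun a ha => hψ a (Finsupp.support_mono h ha)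

lemma SuppB.add {φ ψ : A →₀ ℕ} (hφ : SuppB bA φ) (hψ : SuppB bA ψ) : SuppB bA (φ + ψ) := by
  intro a ha
  rcases Finset.mem_union.mp (Finsupp.support_add ha) with h | h
  exacts [hφ a h, hψ a h]

lemma suppB_single (i : ιA) (n : ℕ) : SuppB bA (Finsupp.single (bA i) n) := fun _ ha =>
  ⟨i, (Finset.mem_singleton.mp (Finsupp.support_single_subset ha)).symm⟩

end SuppB

section Recursion

variable (v : L) (p : (A →₀ ℕ) → (A →₀ ℕ) → UEA A L)

lemma pOne_zero (hp : IsP v p) : pOne p 0 = 1 := by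
  rw [pOne, wt_eq_zero_iff.mpr rfl, Finsupp.single_zero, hp.1]

lemma pOne_eq_neg_inv_smul_sum (hp : IsP v p) {χ : A →₀ ℕ} (hχ : χ ≠ 0) :
    pOne p χ = -((wt χ : ℂ)⁻¹) • ∑ ψ ∈ (Finset.Iic χ).erase 0,
      ((mF ψ : ℕ) : ℂ) • (el (piF ψ) v * pOne p (χ - ψ)) := by
  obtain ⟨-, hp_wt, hp_rec⟩ := hp
  set n := wt χ
  have hn : 0 < n := wt_pos hχ
  rw [pOne, hp_rec χ _ hχ (by simpa using hn.ne') (wt_single 1 n).symm]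
  congr 1
  refine Finset.sum_congr rfl fun ψ hψ => ?_
  obtain ⟨hψ0, hψχ⟩ := Finset.mem_erase.mp hψ
  rw [Finset.mem_Iic] at hψχ
  have hψn : wt ψ ≤ n := wt_le_wt hψχ
  -- only `ψ₂ = |ψ|·χ₁` has the weight required by the recursion
  rw [Finset.sum_eq_single_of_mem (Finsupp.single 1 (wt ψ))]
  · rw [mF_single, piF_single, one_pow, mul_one, mul_one, ← Finsupp.single_tsub, pOne,
      wt_tsub hψχ]
  · simpa [Finsupp.single_le_single] using ⟨(wt_pos hψ0).ne', hψn⟩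
  · intro ψ₂ hψ₂ hne
    obtain ⟨-, hψ₂n⟩ := Finset.mem_erase.mp hψ₂
    rw [Finset.mem_Iic] at hψ₂n
    have hψ₂ := eq_single_wt_of_le_single hψ₂n
    have hψ₂n' : wt ψ₂ ≤ n := wt_single (1 : A) n ▸ wt_le_wt hψ₂n
    rw [hp_wt, mul_zero, smul_zero]
    rw [wt_tsub hψχ, wt_tsub hψ₂n, wt_single]
    exact fun h => hne (by rw [hψ₂]; congr 1; omega)

def elAlg : Subalgebra ℂ (UEA A L) := Algebra.adjoin ℂ {u : UEA A L | ∃ a : A, u = el a v}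

instance : IsMulCommutative (elAlg (A := A) v) :=
  Algebra.isMulCommutative_adjoin ℂ (by rintro _ ⟨a, rfl⟩ _ ⟨b, rfl⟩; exact commute_el a b v)

lemma el_mem_elAlg (a : A) : el a v ∈ elAlg v := Algebra.subset_adjoin ⟨a, rfl⟩

lemma p_mem_elAlg (hp : IsP v p) (φ χ : A →₀ ℕ) : p φ χ ∈ elAlg v := by
  obtain ⟨hp_zero, hp_wt, hp_rec⟩ := hp
  induction hφ : wt φ using Nat.strong_induction_on generalizing φ χ with
  | _ n ih =>
  by_cases hwt : wt φ = wt χ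
  swap
  · rw [hp_wt φ χ hwt]; exact zero_mem _
  rcases eq_or_ne φ 0 with rfl | hφ0
  · obtain rfl : χ = 0 := wt_eq_zero_iff.mp (by rw [← hwt, wt_eq_zero_iff])
    rw [hp_zero]; exact one_mem _
  have hχ0 : χ ≠ 0 := fun h => hφ0 (wt_eq_zero_iff.mp (by rw [hwt, h, wt_eq_zero_iff]))
  rw [hp_rec φ χ hφ0 hχ0 hwt]
  refine Subalgebra.smul_mem _ (Subalgebra.sum_mem _ fun ψ₁ hψ₁ => Subalgebra.sum_mem _
    fun ψ₂ _ => Subalgebra.smul_mem _ (mul_mem (el_mem_elAlg v _) ?_) _) _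
  obtain ⟨hψ₁0, hψ₁φ⟩ := Finset.mem_erase.mp hψ₁
  rw [Finset.mem_Iic] at hψ₁φ
  refine ih _ ?_ _ _ rfl
  have hψ₁pos := wt_pos hψ₁0
  have hφpos := wt_pos hφ0
  rw [wt_tsub hψ₁φ]
  omega

open scoped IsMulCommutative

def elMonomial (χ : A →₀ ℕ) : UEA A L :=
  ((χ.prod fun a n => (⟨el a v, el_mem_elAlg v a⟩ : elAlg v) ^ n : elAlg v) : UEA A L)

lemma elMonomial_zero : elMonomial v (0 : A →₀ ℕ) = 1 := by
  rw [elMonomial, Finsupp.prod_zero_index]; rfl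

lemma elMonomial_add (φ ψ : A →₀ ℕ) :
    elMonomial v (φ + ψ) = elMonomial v φ * elMonomial v ψ := by
  rw [elMonomial, Finsupp.prod_add_index' (fun _ => pow_zero _) (fun _ _ _ => pow_add _ _ _)]
  rfl

lemma elMonomial_single_add (a : A) (χ : A →₀ ℕ) :
    elMonomial v (Finsupp.single a 1 + χ) = el a v * elMonomial v χ := by
  rw [elMonomial_add, elMonomial, Finsupp.prod_single_index (by exact pow_zero _), pow_one]

variable {ιA : Type*} (bA : Module.Basis ιA ℂ A)

def monomialsLT (n : ℕ) : Submodule ℂ (UEA A L) :=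
  Submodule.span ℂ {u | ∃ χ : A →₀ ℕ, SuppB bA χ ∧ wt χ < n ∧ u = elMonomial v χ}

lemma monomialsLT_mono {m n : ℕ} (h : m ≤ n) : monomialsLT v bA m ≤ monomialsLT v bA n :=
  Submodule.span_mono fun _ ⟨χ, hχ, hχm, hu⟩ => ⟨χ, hχ, hχm.trans_le h, hu⟩

lemma elMonomial_mem_monomialsLT {χ : A →₀ ℕ} (hχ : SuppB bA χ) {n : ℕ} (hn : wt χ < n) :
    elMonomial v χ ∈ monomialsLT v bA n :=
  Submodule.subset_span ⟨χ, hχ, hn, rfl⟩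

def elLinear : A →ₗ[ℂ] UEA A L where
  toFun a := el a v
  map_add' a b := by rw [el, el, el, TensorProduct.add_tmul, map_add]
  map_smul' c a := by rw [el, el, ← TensorProduct.smul_tmul', map_smul]; rfl

lemma el_mul_mem_monomialsLT (a : A) {n : ℕ} {x : UEA A L} (hx : x ∈ monomialsLT v bA n) :
    el a v * x ∈ monomialsLT v bA (n + 1) := by
  have hbasis : ∀ i, monomialsLT v bA n ≤
      (monomialsLT v bA (n + 1)).comap (LinearMap.mulLeft ℂ (el (bA i) v)) := by
    intro i
    rw [monomialsLT, Submodule.span_le]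
    rintro _ ⟨χ, hχ, hχn, rfl⟩
    rw [SetLike.mem_coe, Submodule.mem_comap, LinearMap.mulLeft_apply,
      ← elMonomial_single_add]
    exact elMonomial_mem_monomialsLT v bA ((suppB_single i 1).add hχ)
      (by rw [wt_add, wt_single]; omega)
  -- `a ↦ (v ⊗ a) x` is linear, so it suffices to treat `a ∈ 𝔹`.
  have hall : Submodule.span ℂ (Set.range bA) ≤
      (monomialsLT v bA (n + 1)).comap (LinearMap.mulRight ℂ x ∘ₗ elLinear v) := by
    rw [Submodule.span_le]
    rintro _ ⟨i, rfl⟩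
    exact hbasis i hx
  exact hall (bA.span_eq ▸ Submodule.mem_top : a ∈ Submodule.span ℂ (Set.range bA))

lemma el_piF_mul_pOne_sub_smul_mem {χ ψ : A →₀ ℕ} (hχ : SuppB bA χ) (hψχ : ψ ≤ χ)
    (hψ : ψ ≠ 0) {q : ℚ} (hq : 0 < q)
    (hlead : pOne p (χ - ψ) - ((-1) ^ wt (χ - ψ) * q : ℂ) • elMonomial v (χ - ψ) ∈
      monomialsLT v bA (wt (χ - ψ))) :
    ∃ r : ℚ, 0 ≤ r ∧ (wt ψ = 1 → 0 < r) ∧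
      ((mF ψ : ℕ) : ℂ) • (el (piF ψ) v * pOne p (χ - ψ)) -
        (r : ℂ) • ((-1 : ℂ) ^ (wt χ - 1) • elMonomial v χ) ∈ monomialsLT v bA (wt χ) := by
  set c : ℂ := (-1) ^ wt (χ - ψ) * q
  set d := pOne p (χ - ψ) - c • elMonomial v (χ - ψ)
  have hwt : wt (χ - ψ) + wt ψ = wt χ := by
    rw [wt_tsub hψχ]; have := wt_le_wt hψχ; omega
  have hψpos := wt_pos hψ
  have hd : el (piF ψ) v * d ∈ monomialsLT v bA (wt χ) :=
    monomialsLT_mono v bA (by omega) (el_mul_mem_monomialsLT v bA _ hlead)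
  have hsplit : pOne p (χ - ψ) = c • elMonomial v (χ - ψ) + d := (add_sub_cancel _ _).symm
  rcases (Nat.one_le_iff_ne_zero.mpr hψpos.ne').eq_or_lt with hψ1 | hψ2
  · -- `ψ = χ_a`, and `(v ⊗ a) ∏_b (v ⊗ b)^{(χ - χ_a)(b)} = ∏_b (v ⊗ b)^{χ(b)}`
    obtain ⟨a, rfl⟩ := eq_single_of_wt_eq_one hψ1.symm
    refine ⟨q, hq.le, fun _ => hq, ?_⟩
    have hc : c = (-1) ^ (wt χ - 1) * q := by simp only [c]; congr 2; omega
    convert hd using 1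
    rw [mF_single, piF_single, pow_one, Nat.cast_one, one_smul, hsplit, mul_add, mul_smul_comm,
      ← elMonomial_single_add, add_tsub_cancel_of_le hψχ, hc, smul_smul, mul_comm,
      add_sub_cancel_left]
  · refine ⟨0, le_rfl, by omega, ?_⟩
    rw [Rat.cast_zero, zero_smul, sub_zero, hsplit, mul_add, mul_smul_comm]
    refine Submodule.smul_mem _ _ (add_mem (Submodule.smul_mem _ _ ?_) hd)
    exact monomialsLT_mono v bA (by omega) (el_mul_mem_monomialsLT v bA _
      (elMonomial_mem_monomialsLT v bA (hχ.mono tsub_le_self) (Nat.lt_succ_self _)))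

lemma pOne_sub_smul_elMonomial_mem (hp : IsP v p) {χ : A →₀ ℕ} (hχ : SuppB bA χ) :
    ∃ q : ℚ, 0 < q ∧ pOne p χ - ((-1) ^ wt χ * q : ℂ) • elMonomial v χ ∈
      monomialsLT v bA (wt χ) := by
  induction hn : wt χ using Nat.strong_induction_on generalizing χ with
  | _ n ih =>
  rcases eq_or_ne χ 0 with rfl | hχ0
  · refine ⟨1, one_pos, ?_⟩
    rw [pOne_zero v p hp, elMonomial_zero, ← hn, wt_eq_zero_iff.mpr rfl]
    simp
  obtain ⟨m, rfl⟩ : ∃ m, n = m + 1 := Nat.exists_eq_add_one.mpr (hn ▸ wt_pos hχ0)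
  set s := (Finset.Iic χ).erase 0
  have hterm : ∀ ψ ∈ s, ∃ r : ℚ, 0 ≤ r ∧ (wt ψ = 1 → 0 < r) ∧
      ((mF ψ : ℕ) : ℂ) • (el (piF ψ) v * pOne p (χ - ψ)) -
        (r : ℂ) • ((-1 : ℂ) ^ m • elMonomial v χ) ∈ monomialsLT v bA (m + 1) := by
    intro ψ hψ
    obtain ⟨hψ0, hψχ⟩ := Finset.mem_erase.mp hψ
    rw [Finset.mem_Iic] at hψχ
    have hlt : wt (χ - ψ) < m + 1 := by rw [wt_tsub hψχ]; have := wt_pos hψ0; omega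
    obtain ⟨q, hq, hlead⟩ := ih _ hlt (hχ.mono tsub_le_self) rfl
    simpa [hn] using el_piF_mul_pOne_sub_smul_mem v p bA hχ hψχ hψ0 hq hlead
  choose! r hr_nonneg hr_pos hr using hterm
  obtain ⟨a, ha⟩ := Finsupp.support_nonempty_iff.mpr hχ0
  have ha_mem : Finsupp.single a 1 ∈ s := Finset.mem_erase.mpr ⟨by simp,
    Finset.mem_Iic.mpr (Finsupp.single_le_iff.mpr (Finsupp.mem_support_iff.mp ha).bot_lt)⟩
  have hR : 0 < ∑ ψ ∈ s, r ψ :=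
    Finset.sum_pos' hr_nonneg ⟨_, ha_mem, hr_pos _ ha_mem (wt_single a 1)⟩
  refine ⟨(∑ ψ ∈ s, r ψ) / (m + 1), by positivity, ?_⟩
  convert (monomialsLT v bA (m + 1)).smul_mem (-((m + 1 : ℕ) : ℂ)⁻¹)
    (sum_sub_sum_smul_mem hr) using 1
  rw [pOne_eq_neg_inv_smul_sum v p hp hχ0, hn, smul_sub, smul_smul, smul_smul]
  congr 2
  push_cast
  field_simp
  ring

lemma elMonomial_mem_span_pOne (hp : IsP v p) {χ : A →₀ ℕ} (hχ : SuppB bA χ) :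
    elMonomial v χ ∈ Submodule.span ℂ {u | ∃ χ : A →₀ ℕ, SuppB bA χ ∧ u = pOne p χ} := by
  induction hn : wt χ using Nat.strong_induction_on generalizing χ with
  | _ n ih =>
  obtain ⟨q, hq, hlead⟩ := pOne_sub_smul_elMonomial_mem v p bA hp hχ
  have hlower : monomialsLT v bA (wt χ) ≤
      Submodule.span ℂ {u | ∃ χ : A →₀ ℕ, SuppB bA χ ∧ u = pOne p χ} := by
    rw [monomialsLT, Submodule.span_le]
    rintro _ ⟨ψ, hψ, hψn, rfl⟩
    exact ih _ (hn ▸ hψn) hψ rfl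
  have hc : ((-1) ^ wt χ * q : ℂ) ≠ 0 := by simp [hq.ne']
  have hpχ : pOne p χ ∈ Submodule.span ℂ {u | ∃ χ : A →₀ ℕ, SuppB bA χ ∧ u = pOne p χ} :=
    Submodule.subset_span ⟨χ, hχ, rfl⟩
  have h := Submodule.sub_mem _ hpχ (hlower hlead)
  rwa [sub_sub_cancel, Submodule.smul_mem_iff _ hc] at h

lemma elAlg_le_span_elMonomial : Subalgebra.toSubmodule (elAlg v) ≤
    Submodule.span ℂ {u | ∃ χ : A →₀ ℕ, SuppB bA χ ∧ u = elMonomial v χ} := by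
  set W := Submodule.span ℂ {u | ∃ χ : A →₀ ℕ, SuppB bA χ ∧ u = elMonomial v χ}
  have hW_one : (1 : UEA A L) ∈ W := by
    rw [← elMonomial_zero v]
    exact Submodule.subset_span ⟨0, suppB_zero, rfl⟩
  have hW_mul : W * W ≤ W := by
    rw [Submodule.span_mul_span, Submodule.span_le]
    rintro _ ⟨_, ⟨φ, hφ, rfl⟩, _, ⟨ψ, hψ, rfl⟩, rfl⟩
    change elMonomial v φ * elMonomial v ψ ∈ W
    rw [← elMonomial_add]
    exact Submodule.subset_span ⟨_, hφ.add hψ, rfl⟩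
  have hW_el (a : A) : el a v ∈ W := by
    have hV : monomialsLT v bA 2 ≤ W := Submodule.span_mono fun _ ⟨χ, hχ, _, hu⟩ => ⟨χ, hχ, hu⟩
    have h := el_mul_mem_monomialsLT v bA a (elMonomial_mem_monomialsLT v bA suppB_zero one_pos)
    rw [elMonomial_zero, mul_one] at h
    exact hV h
  exact Algebra.adjoin_le (S := W.toSubalgebra hW_one fun _ _ hx hy => hW_mul
    (Submodule.mul_mem_mul hx hy)) (by rintro _ ⟨a, rfl⟩; exact hW_el a)

end Recursion

theorem p_spans_Cartan_part_general (S : Sl2Data L) {ιA : Type*} (bA : Module.Basis ιA ℂ A)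
    (p : (A →₀ ℕ) → (A →₀ ℕ) → UEA A L) (hp : IsP S.h p) :
    Submodule.span ℂ {u : UEA A L | ∃ χ : A →₀ ℕ, SuppB bA χ ∧ u = pOne p χ} =
      Subalgebra.toSubmodule (Algebra.adjoin ℂ {u : UEA A L | ∃ a : A, u = el a S.h}) := by
  apply le_antisymm
  · rw [Submodule.span_le]
    rintro _ ⟨χ, -, rfl⟩
    exact p_mem_elAlg S.h p hp _ _
  · refine (elAlg_le_span_elMonomial S.h bA).trans (Submodule.span_le.mpr ?_)
    rintro _ ⟨χ, hχ, rfl⟩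
    exact elMonomial_mem_span_pOne S.h p bA hp hχ

/-- the `ℂ`-span of `{p(χ) : χ ∈ F(𝔹)}` equals the unital subalgebra of
`U(sl₂ ⊗ A)` generated by `{h ⊗ a : a ∈ A}`. -/
theorem p_spans_Cartan_part (S : Sl2Data L) {ιA : Type*} (bA : Module.Basis ιA ℂ A)
    (hmul : ∀ i j : ιA, ∃ k : ιA, bA i * bA j = bA k)
    (p : (A →₀ ℕ) → (A →₀ ℕ) → UEA A L) (hp : IsP S.h p) :
    Submodule.span ℂ {u : UEA A L | ∃ χ : A →₀ ℕ, SuppB bA χ ∧ u = pOne p χ} =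
      Subalgebra.toSubmodule (Algebra.adjoin ℂ {u : UEA A L | ∃ a : A, u = el a S.h}) :=
  p_spans_Cartan_part_general S bA p hp

end MapAlgebra
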